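/- Fix 0 ≤ p < 1. Let L : ℕ → ℝ satisfy L(0) = 0 and, for all n ≥ 1, L(n) = 1 + p·L(n−1) + ((1−p)/H_n)·Σ_{k=1}^{n} (1/k)·L(k−1). Define h_0 = 0 and h_k = 1/(k·H_k) for k ≥ 1. Then for all n ≥ 1, L(n) − L(n−1) = h_n + Σ_{k=1}^{n} p^k · (Π_{j=0}^{k−1} (1 − h_{n−j})) · h_{n−k}. -/

import Mathlib

open Finset

/-- The `n`-th harmonic number `H_n = ∑_{k=1}^n 1/k`, with `H 0 = 0`. -/
noncomputable def H (n : ℕ) : ℝ := ∑ k ∈ Finset.Icc 1 n, (1 : ℝ) / k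

/-- `h 0 = 0` and `h k = 1/(k·H_k)` for `k ≥ 1`. -/
noncomputable def h (k : ℕ) : ℝ := if k = 0 then 0 else 1 / ((k : ℝ) * H k)

/-! Write `D n = L n - L (n - 1)`. Clearing `H n` from the recurrence and subtracting its
instances at `n` and `n + 1` gives `H (n+1) D (n+1) = p H n D n + 1/(n+1)`; since
`H n / H (n+1) = 1 - h (n+1)` this is the first-order linear recurrence
`D (n+1) = h (n+1) + p (1 - h (n+1)) D n`, and unrolling it from `D 0 = 0 = h 0` gives the
sum. -/

theorem sum_range_succ_eq_add_sum_Icc {M : Type*} [AddCommMonoid M] (f : ℕ → M) (n : ℕ) :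
    ∑ k ∈ range (n + 1), f k = f 0 + ∑ k ∈ Icc 1 n, f k := by
  rw [Nat.range_succ_eq_Icc_zero, Icc_eq_cons_Ioc n.zero_le, sum_cons, ← Icc_add_one_left_eq_Ioc,
    zero_add]

theorem eq_sum_of_succ_eq {R : Type*} [CommRing R] (a x : ℕ → R) (p : R) (h0 : x 0 = a 0)
    (hsucc : ∀ n, x (n + 1) = a (n + 1) + p * (1 - a (n + 1)) * x n) (n : ℕ) :
    x n = ∑ k ∈ range (n + 1), p ^ k * (∏ j ∈ range k, (1 - a (n - j))) * a (n - k) := by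
  induction n with
  | zero => simp [h0]
  | succ n ih =>
    rw [hsucc, ih, sum_range_succ' _ (n + 1), mul_sum, add_comm]
    simp only [prod_range_succ', pow_succ, Nat.sub_zero]
    congr 1
    · exact sum_congr rfl fun k _ => by simp only [Nat.add_sub_add_right]; ring
    · simp

theorem H_succ (n : ℕ) : H (n + 1) = H n + 1 / (n + 1) := by
  rw [H, H, sum_Icc_succ_top (by omega)]
  push_cast
  rfl

theorem H_nonneg (n : ℕ) : 0 ≤ H n :=
  sum_nonneg fun _ _ => by positivity

theorem H_pos {n : ℕ} (hn : n ≠ 0) : 0 < H n := by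
  obtain ⟨m, rfl⟩ := Nat.exists_eq_succ_of_ne_zero hn
  rw [H_succ]
  have := H_nonneg m
  positivity

theorem h_succ (n : ℕ) : h (n + 1) = 1 / ((n + 1) * H (n + 1)) := by
  simp [h]

theorem one_sub_h_succ (n : ℕ) : 1 - h (n + 1) = H n / H (n + 1) := by
  have := H_pos n.succ_ne_zero
  rw [h_succ]
  field_simp
  rw [H_succ]
  field_simp
  ring

section Recurrence

variable {p : ℝ} {L : ℕ → ℝ}
  (hrec : ∀ n : ℕ, 1 ≤ n →
    L n = 1 + p * L (n - 1) + ((1 - p) / H n) * ∑ k ∈ Icc 1 n, (1 / (k : ℝ)) * L (k - 1))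
include hrec

theorem H_mul_eq_sum (n : ℕ) :
    H n * (L n - 1 - p * L (n - 1)) = (1 - p) * ∑ k ∈ Icc 1 n, (1 / (k : ℝ)) * L (k - 1) := by
  rcases Nat.eq_zero_or_pos n with rfl | hn
  · simp [H]
  · have := (H_pos hn.ne').ne'
    rw [hrec n hn]
    field_simp
    ring

theorem succ_sub_eq (n : ℕ) :
    L (n + 1) - L n = h (n + 1) + p * (1 - h (n + 1)) * (L n - L (n - 1)) := by
  have key : H (n + 1) * (L (n + 1) - L n) = p * H n * (L n - L (n - 1)) + 1 / (n + 1) := by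
    have e1 := H_mul_eq_sum hrec (n + 1)
    have e0 := H_mul_eq_sum hrec n
    rw [sum_Icc_succ_top (by omega), Nat.add_sub_cancel, H_succ] at e1
    push_cast at e1
    rw [H_succ]
    linear_combination e1 - e0
  have := H_pos n.succ_ne_zero
  rw [one_sub_h_succ, h_succ]
  field_simp at key ⊢
  linear_combination key

end Recurrence

theorem stmt_17_general (p : ℝ) (L : ℕ → ℝ)
    (hrec : ∀ n : ℕ, 1 ≤ n →
      L n = 1 + p * L (n - 1) +
        ((1 - p) / H n) * ∑ k ∈ Finset.Icc 1 n, (1 / (k : ℝ)) * L (k - 1)) :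
    ∀ n : ℕ, 1 ≤ n →
      L n - L (n - 1) =
        h n + ∑ k ∈ Finset.Icc 1 n,
          p ^ k * (∏ j ∈ Finset.range k, (1 - h (n - j))) * h (n - k) := by
  intro n _
  -- `L 0 - L (0 - 1) = 0` because `0 - 1 = 0` in `ℕ`.
  rw [eq_sum_of_succ_eq h (fun n => L n - L (n - 1)) p (by simp [h]) (succ_sub_eq hrec) n,
    sum_range_succ_eq_add_sum_Icc]
  simp only [pow_zero, prod_range_zero, Nat.sub_zero, one_mul]

theorem stmt_17 (p : ℝ) (hp0 : 0 ≤ p) (hp1 : p < 1) (L : ℕ → ℝ) (hL0 : L 0 = 0)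
    (hrec : ∀ n : ℕ, 1 ≤ n →
      L n = 1 + p * L (n - 1) +
        ((1 - p) / H n) * ∑ k ∈ Finset.Icc 1 n, (1 / (k : ℝ)) * L (k - 1)) :
    ∀ n : ℕ, 1 ≤ n →
      L n - L (n - 1) =
        h n + ∑ k ∈ Finset.Icc 1 n,
          p ^ k * (∏ j ∈ Finset.range k, (1 - h (n - j))) * h (n - k) :=
  stmt_17_general p L hrec
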